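/- arXiv:1407.0334 — 4 statements merged into one kernel-verified Lean document; each statement's English description precedes it below -/
import Mathlib

section
/- The language UPOWER = {1^m : m = 2^n for some n ≥ 0} can be recognized by a PAFA: there exists a PAFA over the unary alphabet {1} whose language is exactly UPOWER. -/
/-!
A realtime private alternating finite automaton (PAFA) over input alphabet `α`.

* Common state components: `Fin kc`; private state components: `Fin kp`.
* Public game alphabet Γ = `Fin g`, private game alphabet Δ = `Fin d` (they are disjoint by
  construction, being the two summands of `Fin g ⊕ Fin d`), each of size at least 2.
* Tape symbols: `Option α`, with `none` the end-marker ¢.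
* The transition functions return either a single successor (`Sum.inl`, a non-branching move)
  or a family of successors indexed by the relevant game alphabet (`Sum.inr`, a branching move).
* Successors of universal branching moves indexed by public symbols must keep the private
  component unchanged.
* On input `w`, the automaton processes ¢ w ¢, making two transitions per tape symbol; this is
  realized by listing every tape symbol twice, one occurrence per transition.
-/
structure PAFA (α : Type) where
  kc : ℕ
  kp : ℕ
  g : ℕ
  d : ℕ
  g_ge : 2 ≤ g
  d_ge : 2 ≤ d
  /-- the set of universal states (`true` = universal; the rest are existential) -/
  isUniv : Fin kc × Fin kp → Bool
  /-- existential transition function: depends only on the common component, and yields either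
  a single successor common component or a family indexed by Γ -/
  δE : Fin kc → Fin kc ⊕ (Fin g → Fin kc)
  /-- universal transition function: yields either a single successor state or a family
  indexed by Γ ⊕ Δ -/
  δU : Fin kc × Fin kp → Option α → (Fin kc × Fin kp) ⊕ ((Fin g ⊕ Fin d) → Fin kc × Fin kp)
  /-- successors of universal branching moves indexed by public symbols have private component
  equal to the current one -/
  pub_private : ∀ s σ fam, δU s σ = Sum.inr fam → ∀ γ : Fin g, (fam (Sum.inl γ)).2 = s.2
  /-- the initial state (s_{c0}, s_{p0}) -/
  init : Fin kc × Fin kp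
  /-- the accepting common component q_a -/
  qa : Fin kc

namespace PAFA

variable {α : Type} (A : PAFA α)

/-- An existential strategy: assigns a public game symbol to each pair of a common state
component and a finite sequence over Γ (the public moves seen so far). -/
abbrev Strategy := Fin A.kc × List (Fin A.g) → Fin A.g

/-- One transition from state `st` with public-move history `h`, reading tape symbol `σ`:
existential branchings are resolved by the strategy `f`, universal branchings are resolved in
all possible ways, and `P` is the property required of each successor (together with its
updated history).  Non-branching moves do not count as moves and leave the history unchanged;
branching moves labeled by public symbols (existential moves and public universal moves)
append their Γ-label to the history; private universal moves leave it unchanged. -/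
def Step (f : A.Strategy) (σ : Option α) (st : Fin A.kc × Fin A.kp)
    (h : List (Fin A.g)) (P : Fin A.kc × Fin A.kp → List (Fin A.g) → Prop) : Prop :=
  if A.isUniv st then
    match A.δU st σ with
    | Sum.inl s' => P s' h
    | Sum.inr fam =>
        (∀ γ : Fin A.g, P (fam (Sum.inl γ)) (h ++ [γ])) ∧
        (∀ δ' : Fin A.d, P (fam (Sum.inr δ')) h)
  else
    match A.δE st.1 with
    | Sum.inl c' => P (c', st.2) h
    | Sum.inr fam => P (fam (f (st.1, h)), st.2) (h ++ [f (st.1, h)])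

/-- All computation paths consistent with strategy `f`, starting from state `st` with
public-move history `h` and the given remaining tape (each tape symbol occurring twice, one
occurrence per transition), end in a state whose common component is `A.qa`. -/
def Acc (f : A.Strategy) : List (Option α) → Fin A.kc × Fin A.kp → List (Fin A.g) → Prop
  | [], st, _ => st.1 = A.qa
  | σ :: rest, st, h => A.Step f σ st h fun st' h' => Acc f rest st' h'

/-- The tape ¢ w ¢ with every tape symbol listed twice (two transitions per tape symbol);
`none` is the end-marker ¢. -/
def tape (w : List α) : List (Option α) :=
  (none :: (w.map some) ++ [none]).flatMap fun σ => [σ, σ]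

/-- `A` accepts `w` iff there is an existential strategy under which every consistent
computation path ends in a state with accepting common component. -/
def Accepts (w : List α) : Prop :=
  ∃ f : A.Strategy, A.Acc f (tape w) A.init []

/-- The language of `A`. -/
def lang : Set (List α) := { w | A.Accepts w }

end PAFA

/-!
The universal player's public moves all lead to acceptance, so the prover's history is the list
of its own moves, and a strategy amounts to a stream `u` of symbols plain (`0`), mark (`1`) and
end (`2`), fixed before it sees any private move. The universal player privately picks one of
three checks on the input `1^m`:
* base: with one prover move every 4 transitions, the first end symbol is met exactly when the
  input runs out, i.e. it is the `e`-th symbol with `m = 2e` (or `m = 1`);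
* anchor: the first symbol is not plain;
* scan: at one move every 3 transitions, on a mark before the end, say the `q`-th symbol, the
  universal player may switch to one move every 5 transitions until the next non-plain symbol,
  and then to the base speed. As `3q + 5q = 4 · 2q`, the input runs out on time exactly when
  that symbol is the `2q`-th.

So the marks sit at `1, 2, 4, …` up to the end symbol, which makes `e`, hence `m`, a power of
two. Conversely, for `m = 2e` with `e` a power of two, the prover wins with marks at the powers
of two below `e` and the end symbol at `e`.
-/

theorem Nat.exists_eq_two_pow_of_doubling {e : ℕ} (P : ℕ → Prop) (h1 : P 1)
    (hle : ∀ q, P q → q ≤ e) (hstep : ∀ k, P (2 ^ k) → 2 ^ k ≠ e → P (2 ^ (k + 1))) :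
    ∃ n, e = 2 ^ n := by
  by_contra! hne
  have hP : ∀ k, P (2 ^ k) := fun k => by
    induction k with
    | zero => simpa using h1
    | succ k ih => exact hstep k ih (hne k).symm
  exact absurd (hle _ (hP e)) (not_le.2 Nat.lt_two_pow_self)

namespace PAFA

variable {α : Type} (A : PAFA α) (f : A.Strategy)

theorem acc_iff_of_sink {s : Fin A.kc × Fin A.kp} (hU : A.isUniv s = true)
    (hs : ∀ σ, A.δU s σ = Sum.inl s) (l : List (Option α)) (h : List (Fin A.g)) :
    A.Acc f l s h ↔ s.1 = A.qa := by
  induction l with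
  | nil => rfl
  | cons σ l ih => simp only [Acc, Step, hU, if_true, hs, ih]

end PAFA

namespace UPower

abbrev State : Type := Fin 7 × Fin 26

def play (γ : Fin 3) : Fin 7 := ⟨γ + 1, by omega⟩

/-- Deterministic successor of a universal state `(c, p)` on a tape symbol, `true` standing for
`1` and `false` for `¢`.
Common components: 0 ready (the only existential one), 1 / 2 / 3 the prover has just played
plain / mark / end, 4 wait, 5 accept, 6 dead.
Private components: 0 start, 1 / 2 / 3 entering the base / scan / anchor check, 4 base,
5 tail, 6–10 counters of the base and tail blocks, 11 expecting `¢`, 12–13 scan,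
14 entering the doubling check, 15–24 doubling, 25 anchor. -/
def next : ℕ → ℕ → Bool → Fin 7 × Fin 26
  | 4, 1, _ => (0, 4)
  | 4, 2, _ => (0, 12)
  | 4, 3, _ => (0, 25)
  | 1, 4, true => (4, 6)
  | 2, 4, true => (4, 6)
  | 3, 4, true => (4, 8)
  | 1, 5, true => (4, 6)
  | 2, 5, true => (4, 6)
  | 3, 5, true => (4, 9)
  | 4, 6, true => (4, 7)
  | 4, 7, true => (0, 5)
  | 4, 8, true => (4, 10)
  | 4, 8, false => (5, 0)
  | 4, 9, true => (4, 10)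
  | 4, 10, true => (4, 11)
  | 4, 11, false => (5, 0)
  | 1, 12, true => (4, 13)
  | 1, 12, false => (5, 0)
  | 2, 12, false => (5, 0)
  | 3, 12, _ => (5, 0)
  | 4, 13, true => (0, 12)
  | 4, 13, false => (5, 0)
  | 4, 14, true => (0, 15)
  | 1, 15, true => (4, 16)
  | 2, 15, true => (4, 17)
  | 3, 15, true => (4, 18)
  | 4, 16, true => (4, 19)
  | 4, 17, true => (4, 20)
  | 4, 18, true => (4, 21)
  | 4, 19, true => (4, 22)
  | 4, 20, true => (4, 23)
  | 4, 21, true => (4, 24)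
  | 4, 22, true => (0, 15)
  | 4, 23, true => (0, 5)
  | 4, 24, true => (4, 11)
  | 2, 25, _ => (5, 0)
  | 3, 25, _ => (5, 0)
  | _, _, _ => (6, 0)

@[reducible] def pafa : PAFA Unit where
  kc := 7
  kp := 26
  g := 3
  d := 4
  g_ge := by norm_num
  d_ge := by norm_num
  isUniv s := s.1.val != 0
  δE c := if c.val = 0 then Sum.inr play else Sum.inl c
  δU s σ :=
    if s.1.val = 5 ∨ s.1.val = 6 then Sum.inl s
    else if s.1.val = 4 ∧ s.2.val = 0 then
      Sum.inr fun
        | Sum.inl _ => (5, s.2)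
        | Sum.inr d => (4, if d.val = 1 then 2 else if d.val = 2 then 3 else 1)
    else if s.1.val = 2 ∧ s.2.val = 12 ∧ σ.isSome then
      Sum.inr fun
        | Sum.inl _ => (5, s.2)
        | Sum.inr d => if d.val ≤ 1 then (4, 13) else (4, 14)
    else Sum.inl (next s.1.val s.2.val σ.isSome)
  pub_private s σ fam h γ := by
    split_ifs at h <;> cases h <;> rfl
  init := (4, 0)
  qa := 5

/-- The rest of the tape, listed per transition, when `j` transitions on `1`s remain. -/
def restTape (j : ℕ) : List (Option Unit) := List.replicate j (some ()) ++ [none, none]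

@[simp] lemma restTape_zero : restTape 0 = [none, none] := rfl

@[simp] lemma restTape_succ (j : ℕ) : restTape (j + 1) = some () :: restTape j := rfl

lemma tape_replicate (m : ℕ) :
    PAFA.tape (List.replicate m ()) = none :: none :: restTape (2 * m) := by
  have h : (List.replicate m (some ())).flatMap (fun σ => [σ, σ]) =
      List.replicate (2 * m) (some ()) := by
    rw [List.flatMap_replicate, show [some (), some ()] = List.replicate 2 (some ()) from rfl,
      List.flatten_replicate_replicate, mul_comm]
  simp [PAFA.tape, restTape, h]

def hist (f : pafa.Strategy) : ℕ → List (Fin 3)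
  | 0 => []
  | c + 1 => hist f c ++ [f (0, hist f c)]

def stream (f : pafa.Strategy) (c : ℕ) : Fin 3 := f (0, hist f c)

lemma length_hist (f : pafa.Strategy) (c : ℕ) : (hist f c).length = c := by
  induction c with
  | zero => rfl
  | succ c ih => simp [hist, ih]

def ofStream (u : ℕ → Fin 3) : pafa.Strategy := fun q => u q.2.length

lemma stream_ofStream (u : ℕ → Fin 3) : stream (ofStream u) = u :=
  funext fun c => congrArg u (length_hist _ c)

section Checks

variable {u : ℕ → Fin 3} {c j t : ℕ}

def FirstEndAt (u : ℕ → Fin 3) (c t : ℕ) : Prop :=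
  u (c + t) = 2 ∧ ∀ s < t, u (c + s) ≠ 2

def EndCheck (u : ℕ → Fin 3) (c j : ℕ) : Prop := ∃ t, FirstEndAt u c t ∧ j = 4 * (t + 1)

def DoublingCheck (u : ℕ → Fin 3) (c j : ℕ) : Prop :=
  ∃ t, (∀ s < t, u (c + s) = 0) ∧
    (u (c + t) = 2 ∧ j = 5 * (t + 1) ∨
      u (c + t) = 1 ∧ ∃ j', j = 5 * (t + 1) + j' ∧ EndCheck u (c + t + 1) j')

def ScanCheck (u : ℕ → Fin 3) (c j : ℕ) : Prop :=
  ∀ s, 3 * s + 2 ≤ j → (∀ s' < s, u (c + s') ≠ 2) → u (c + s) = 1 →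
    ∃ j', j = 3 * (s + 1) + j' ∧ DoublingCheck u (c + s + 1) j'

lemma FirstEndAt.eq_zero (h : FirstEndAt u c t) (hc : u c = 2) : t = 0 := by
  by_contra ht
  exact h.2 0 (by omega) (by simpa using hc)

lemma firstEndAt_succ (h : u c ≠ 2) : FirstEndAt u c (t + 1) ↔ FirstEndAt u (c + 1) t := by
  simp only [FirstEndAt, Nat.forall_lt_succ_left, Nat.add_zero, Nat.add_right_comm c,
    ← Nat.add_assoc]
  exact ⟨fun h' => ⟨h'.1, h'.2.2⟩, fun h' => ⟨h'.1, h, h'.2⟩⟩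

lemma endCheck_of_end (h : u c = 2) : EndCheck u c j ↔ j = 4 := by
  constructor
  · rintro ⟨t, ht, rfl⟩
    rw [ht.eq_zero h]
  · rintro rfl
    exact ⟨0, ⟨h, by simp⟩, rfl⟩

lemma endCheck_add_four (h : u c ≠ 2) : EndCheck u c (j + 4) ↔ EndCheck u (c + 1) j := by
  constructor
  · rintro ⟨_ | t, ht, hj⟩
    · exact absurd ht.1 h
    · exact ⟨t, (firstEndAt_succ h).1 ht, by omega⟩
  · rintro ⟨t, ht, rfl⟩
    exact ⟨t + 1, (firstEndAt_succ h).2 ht, by ring⟩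

lemma not_endCheck_of_lt (hj : j < 4) : ¬ EndCheck u c j := by
  rintro ⟨t, -, rfl⟩
  omega

lemma doublingCheck_of_plain (h : u c = 0) :
    DoublingCheck u c (j + 5) ↔ DoublingCheck u (c + 1) j := by
  have hc : ∀ t, u (c + (t + 1)) = u (c + 1 + t) := fun t => congrArg u (by omega)
  constructor
  · rintro ⟨_ | t, hz, hend | ⟨hmark, j', hj, hj'⟩⟩
    · simp [h] at hend
    · simp [h] at hmark
    · refine ⟨t, fun s hs => ?_, Or.inl ⟨?_, by omega⟩⟩
      · simpa only [hc] using hz (s + 1) (by omega)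
      · simpa only [hc] using hend.1
    · refine ⟨t, fun s hs => ?_, Or.inr ⟨?_, j', by omega, ?_⟩⟩
      · simpa only [hc] using hz (s + 1) (by omega)
      · simpa only [hc] using hmark
      · convert hj' using 2; omega
  · rintro ⟨t, hz, hend | ⟨hmark, j', hj, hj'⟩⟩
    · refine ⟨t + 1, fun s hs => ?_, Or.inl ⟨by rw [hc]; exact hend.1, by omega⟩⟩
      rcases s with _ | s
      · exact h
      · simpa only [hc] using hz s (by omega)
    · refine ⟨t + 1, fun s hs => ?_, Or.inr ⟨by rw [hc]; exact hmark, j', by omega, ?_⟩⟩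
      · rcases s with _ | s
        · exact h
        · simpa only [hc] using hz s (by omega)
      · convert hj' using 2; omega

lemma doublingCheck_of_mark (h : u c = 1) : DoublingCheck u c (j + 5) ↔ EndCheck u (c + 1) j := by
  constructor
  · rintro ⟨_ | t, hz, hend | ⟨-, j', hj, hj'⟩⟩
    · simp [h] at hend
    · exact (by omega : j = j') ▸ hj'
    · simpa [h] using hz 0 (by omega)
    · simpa [h] using hz 0 (by omega)
  · intro hj
    exact ⟨0, by simp, Or.inr ⟨h, j, by ring, hj⟩⟩

lemma doublingCheck_of_end (h : u c = 2) : DoublingCheck u c j ↔ j = 5 := by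
  constructor
  · rintro ⟨_ | t, hz, hend | ⟨hmark, -⟩⟩
    · exact hend.2
    · simp [h] at hmark
    · simpa [h] using hz 0 (by omega)
    · simpa [h] using hz 0 (by omega)
  · rintro rfl
    exact ⟨0, by simp, Or.inl ⟨h, rfl⟩⟩

lemma not_doublingCheck_of_lt (hj : j < 5) : ¬ DoublingCheck u c j := by
  rintro ⟨t, -, ⟨-, rfl⟩ | ⟨-, j', rfl, -⟩⟩ <;> omega

lemma scanCheck_of_lt_two (hj : j < 2) : ScanCheck u c j :=
  fun s hs => absurd hs (by omega)

lemma scanCheck_two : ScanCheck u c 2 ↔ u c ≠ 1 := by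
  constructor
  · intro hscan hmark
    obtain ⟨j', hj, -⟩ := hscan 0 (by omega) (by simp) (by simpa using hmark)
    omega
  · intro h s hs _ hmark
    obtain rfl : s = 0 := by omega
    exact absurd (by simpa using hmark) h

lemma scanCheck_of_end (h : u c = 2) : ScanCheck u c j := by
  rintro (_ | s) - hend hmark
  · simp [h] at hmark
  · exact absurd (by simpa using h) (hend 0 (by omega))

lemma scanCheck_add_three (h : u c ≠ 2) :
    ScanCheck u c (j + 3) ↔
      ScanCheck u (c + 1) j ∧ (u c = 1 → DoublingCheck u (c + 1) j) := by
  have hc : ∀ s, u (c + (s + 1)) = u (c + 1 + s) := fun s => congrArg u (by omega)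
  constructor
  · intro hscan
    refine ⟨fun s hs hend hmark => ?_, fun hmark => ?_⟩
    · obtain ⟨j', hj, hj'⟩ := hscan (s + 1) (by omega)
        (fun s' hs' => by
          rcases s' with _ | s'
          · simpa using h
          · simpa only [hc] using hend s' (by omega))
        (by simpa only [hc] using hmark)
      exact ⟨j', by omega, by convert hj' using 2; omega⟩
    · obtain ⟨j', hj, hj'⟩ := hscan 0 (by omega) (by simp) (by simpa using hmark)
      exact (by omega : j = j') ▸ hj'
  · rintro ⟨hrest, hfirst⟩ (_ | s) hs hend hmark
    · exact ⟨j, by ring, hfirst (by simpa using hmark)⟩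
    · obtain ⟨j', hj, hj'⟩ := hrest s (by omega)
        (fun s' hs' => by simpa only [hc] using hend (s' + 1) (by omega))
        (by simpa only [hc] using hmark)
      exact ⟨j', by omega, by convert hj' using 2; omega⟩

end Checks

section Semantics

variable (f : pafa.Strategy)

lemma acc_ready (σ : Option Unit) (l : List (Option Unit)) (c : ℕ) (p : Fin 26) :
    pafa.Acc f (σ :: l) ((0, p) : State) (hist f c) ↔
      pafa.Acc f l (play (stream f c), p) (hist f (c + 1)) :=
  Iff.rfl

@[simp] lemma acc_of_accept {s : State} (hs : s.1 = 5) (l h) : pafa.Acc f l s h :=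
  (pafa.acc_iff_of_sink f (by simp [hs]) (by simp [hs]) l h).2 hs

@[simp] lemma not_acc_of_dead {s : State} (hs : s.1 = 6) (l h) : ¬ pafa.Acc f l s h := by
  rw [pafa.acc_iff_of_sink f (by simp [hs]) (by simp [hs]) l h, hs]
  decide

lemma stream_cases (c : ℕ) : stream f c = 0 ∨ stream f c = 1 ∨ stream f c = 2 := by
  omega

lemma acc_expectEnd_iff (j : ℕ) (h) : pafa.Acc f (restTape j) ((4, 11) : State) h ↔ j = 0 := by
  rcases j with _ | j <;> simp [PAFA.Acc, PAFA.Step, next]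

theorem acc_tail_iff (j c : ℕ) :
    pafa.Acc f (restTape j) ((0, 5) : State) (hist f c) ↔ EndCheck (stream f) c j := by
  induction j using Nat.strong_induction_on generalizing c with | _ j ih => ?_
  match j with
  | 0 | 1 | 2 | 3 =>
    rcases stream_cases f c with hγ | hγ | hγ <;>
      simp [acc_ready, hγ, play, PAFA.Acc, PAFA.Step, next, not_endCheck_of_lt]
  | j + 4 =>
    rcases stream_cases f c with hγ | hγ | hγ <;>
      simp [acc_ready, hγ, play, PAFA.Acc, PAFA.Step, next, ih j (by omega) (c + 1),
        endCheck_add_four, endCheck_of_end, acc_expectEnd_iff]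

theorem acc_base_iff (j c : ℕ) :
    pafa.Acc f (restTape j) ((0, 4) : State) (hist f c) ↔
      EndCheck (stream f) c j ∨ stream f c = 2 ∧ j = 2 := by
  match j with
  | 0 | 1 | 2 | 3 =>
    rcases stream_cases f c with hγ | hγ | hγ <;>
      simp [acc_ready, hγ, play, PAFA.Acc, PAFA.Step, next, not_endCheck_of_lt]
  | j + 4 =>
    rcases stream_cases f c with hγ | hγ | hγ <;>
      simp [acc_ready, hγ, play, PAFA.Acc, PAFA.Step, next, acc_tail_iff, endCheck_add_four,
        endCheck_of_end, acc_expectEnd_iff]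

theorem acc_doubling_iff (j c : ℕ) :
    pafa.Acc f (restTape j) ((0, 15) : State) (hist f c) ↔ DoublingCheck (stream f) c j := by
  induction j using Nat.strong_induction_on generalizing c with | _ j ih => ?_
  match j with
  | 0 | 1 | 2 | 3 | 4 =>
    rcases stream_cases f c with hγ | hγ | hγ <;>
      simp [acc_ready, hγ, play, PAFA.Acc, PAFA.Step, next, not_doublingCheck_of_lt]
  | j + 5 =>
    rcases stream_cases f c with hγ | hγ | hγ <;>
      simp [acc_ready, hγ, play, PAFA.Acc, PAFA.Step, next, ih j (by omega) (c + 1), acc_tail_iff,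
        doublingCheck_of_plain, doublingCheck_of_mark, doublingCheck_of_end, acc_expectEnd_iff]

theorem acc_scan_iff (j c : ℕ) :
    pafa.Acc f (restTape j) ((0, 12) : State) (hist f c) ↔ ScanCheck (stream f) c j := by
  induction j using Nat.strong_induction_on generalizing c with | _ j ih => ?_
  match j with
  | 0 | 1 | 2 =>
    rcases stream_cases f c with hγ | hγ | hγ <;>
      simp [acc_ready, hγ, play, PAFA.Acc, PAFA.Step, next, Fin.forall_fin_succ,
        scanCheck_of_lt_two, scanCheck_two]
  | j + 3 =>
    rcases stream_cases f c with hγ | hγ | hγ <;>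
      simp [acc_ready, hγ, play, PAFA.Acc, PAFA.Step, next, Fin.forall_fin_succ,
        ih j (by omega) (c + 1), acc_doubling_iff, scanCheck_add_three, scanCheck_of_end]

theorem acc_anchor_iff (j c : ℕ) :
    pafa.Acc f (restTape j) ((0, 25) : State) (hist f c) ↔ stream f c ≠ 0 := by
  match j with
  | 0 | 1 | j + 2 =>
    rcases stream_cases f c with hγ | hγ | hγ <;>
      simp [acc_ready, hγ, play, PAFA.Acc, PAFA.Step, next]

theorem acc_init_iff (m : ℕ) :
    pafa.Acc f (PAFA.tape (List.replicate m ())) pafa.init [] ↔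
      pafa.Acc f (restTape (2 * m)) ((0, 4) : State) (hist f 0) ∧
        pafa.Acc f (restTape (2 * m)) ((0, 12) : State) (hist f 0) ∧
        pafa.Acc f (restTape (2 * m)) ((0, 25) : State) (hist f 0) := by
  rw [tape_replicate]
  constructor
  · rintro ⟨-, h⟩
    exact ⟨h 0, h 1, h 2⟩
  · rintro ⟨hbase, hscan, hanchor⟩
    refine ⟨fun _ => acc_of_accept f rfl _ _, fun d => ?_⟩
    fin_cases d
    exacts [hbase, hscan, hanchor, hbase]

end Semantics

structure Certificate (u : ℕ → Fin 3) (m : ℕ) : Prop where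
  base : EndCheck u 0 (2 * m) ∨ u 0 = 2 ∧ 2 * m = 2
  scan : ScanCheck u 0 (2 * m)
  anchor : u 0 ≠ 0

theorem accepts_replicate_iff (m : ℕ) :
    pafa.Accepts (List.replicate m ()) ↔ ∃ u, Certificate u m := by
  constructor
  · rintro ⟨f, hf⟩
    rw [acc_init_iff, acc_base_iff, acc_scan_iff, acc_anchor_iff] at hf
    exact ⟨stream f, hf.1, hf.2.1, hf.2.2⟩
  · rintro ⟨u, hu⟩
    refine ⟨ofStream u, ?_⟩
    rw [acc_init_iff, acc_base_iff, acc_scan_iff, acc_anchor_iff, stream_ofStream]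
    exact ⟨hu.base, hu.scan, hu.anchor⟩

section Soundness

variable {u : ℕ → Fin 3}

lemma FirstEndAt.add_eq {c t t' : ℕ} (h0 : FirstEndAt u 0 t) (h : FirstEndAt u c t')
    (hc : c ≤ t) : c + t' = t := by
  by_contra hne
  rcases Nat.lt_or_gt_of_ne hne with hlt | hgt
  · exact h0.2 _ hlt (by simpa using h.1)
  · exact h.2 (t - c) (by omega) (by simpa [Nat.add_sub_cancel' hc] using h0.1)

lemma FirstEndAt.add_lt {c p t : ℕ} (h0 : FirstEndAt u 0 t) (hc : c ≤ t)
    (hp : ∀ s ≤ p, u (c + s) ≠ 2) : c + p < t := by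
  by_contra! hle
  exact hp (t - c) (by omega) (by simpa [Nat.add_sub_cancel' hc] using h0.1)

theorem ScanCheck.two_mul_eq_or_mark {t q : ℕ} (hscan : ScanCheck u 0 (4 * (t + 1)))
    (hend : FirstEndAt u 0 t) (hq : 1 ≤ q) (hqt : q ≤ t) (hmark : u (q - 1) = 1) :
    2 * q = t + 1 ∨ 2 * q ≤ t ∧ u (2 * q - 1) = 1 := by
  obtain ⟨j, hj, hdbl⟩ := hscan (q - 1) (by omega)
    (fun s hs => by simpa using hend.2 s (by omega)) (by simpa using hmark)
  rw [show 0 + (q - 1) + 1 = q by omega] at hdbl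
  obtain ⟨t', hplain, ⟨hE, hj'⟩ | ⟨hM, j', hj', t₂, hend₂, hj''⟩⟩ := hdbl
  · have := hend.add_eq ⟨hE, fun s hs => by simp [hplain s hs]⟩ hqt
    omega
  · have hlt := hend.add_lt (p := t') hqt fun s hs => by
      rcases hs.lt_or_eq with hs | hs
      · simp [hplain s hs]
      · simp [hs, hM]
    have := hend.add_eq hend₂ (by omega)
    refine Or.inr ⟨by omega, ?_⟩
    rwa [show 2 * q - 1 = q + t' by omega]

theorem Certificate.exists_eq_two_pow {m : ℕ} (h : Certificate u m) : ∃ n, m = 2 ^ n := by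
  rcases h.base with ⟨t, hend, hm⟩ | ⟨-, hm⟩
  · let P (q : ℕ) : Prop := q = t + 1 ∨ q ≤ t ∧ u (q - 1) = 1
    have h1 : P 1 := by
      rcases t with _ | t
      · exact Or.inl rfl
      · have h0 : u 0 ≠ 2 := by simpa using hend.2 0 (by omega)
        have hanchor := h.anchor
        exact Or.inr ⟨by omega, by simpa using (by omega : u 0 = 1)⟩
    have hle (q : ℕ) (hq : P q) : q ≤ t + 1 := by
      rcases hq with rfl | ⟨hq, -⟩ <;> omega
    have hstep (k : ℕ) (hk : P (2 ^ k)) (hne : 2 ^ k ≠ t + 1) : P (2 ^ (k + 1)) := by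
      obtain ⟨hk, hmark⟩ := hk.resolve_left hne
      rw [pow_succ, mul_comm]
      exact (hm ▸ h.scan : ScanCheck u 0 _).two_mul_eq_or_mark hend Nat.one_le_two_pow hk hmark
    obtain ⟨n, hn⟩ := Nat.exists_eq_two_pow_of_doubling P h1 hle hstep
    exact ⟨n + 1, by rw [pow_succ]; omega⟩
  · exact ⟨0, by omega⟩

end Soundness

section Completeness

open Classical in
noncomputable def honestStream (e s : ℕ) : Fin 3 :=
  if s + 1 = e then 2 else if s + 1 < e ∧ ∃ k, s + 1 = 2 ^ k then 1 else 0

variable {e s : ℕ}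

lemma honestStream_eq_two (h : s + 1 = e) : honestStream e s = 2 := by
  simp [honestStream, h]

lemma honestStream_ne_two (h : s + 1 ≠ e) : honestStream e s ≠ 2 := by
  unfold honestStream
  rw [if_neg h]
  split_ifs <;> decide

lemma honestStream_eq_one {k : ℕ} (hk : s + 1 = 2 ^ k) (he : s + 1 < e) :
    honestStream e s = 1 := by
  rw [honestStream, if_neg he.ne, if_pos ⟨he, k, hk⟩]

lemma honestStream_eq_zero {k : ℕ} (h₁ : 2 ^ k < s + 1) (h₂ : s + 1 < 2 ^ (k + 1))
    (he : s + 1 < e) : honestStream e s = 0 := by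
  have hpow : ∀ i, s + 1 ≠ 2 ^ i := by
    rintro i hi
    rw [hi, Nat.pow_lt_pow_iff_right (by norm_num)] at h₁ h₂
    omega
  simp [honestStream, he.ne, hpow]

lemma exists_pow_of_honestStream_eq_one (h : honestStream e s = 1) :
    s + 1 < e ∧ ∃ k, s + 1 = 2 ^ k := by
  unfold honestStream at h
  by_cases h₁ : s + 1 = e
  · simp [h₁] at h
  by_cases h₂ : s + 1 < e ∧ ∃ k, s + 1 = 2 ^ k
  · exact h₂
  · rw [if_neg h₁, if_neg h₂] at h
    exact absurd h (by decide)

lemma endCheck_honestStream {c : ℕ} (hc : c < e) : EndCheck (honestStream e) c (4 * (e - c)) :=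
  ⟨e - 1 - c, ⟨honestStream_eq_two (by omega), fun s hs => honestStream_ne_two (by omega)⟩,
    by omega⟩

lemma doublingCheck_honestStream {k : ℕ} (hle : 2 * 2 ^ k ≤ e) :
    DoublingCheck (honestStream e) (2 ^ k) (5 * 2 ^ k + 4 * (e - 2 * 2 ^ k)) := by
  have hpos := Nat.one_le_two_pow (n := k)
  refine ⟨2 ^ k - 1, fun s hs =>
    honestStream_eq_zero (k := k) (by omega) (by rw [pow_succ]; omega) (by omega), ?_⟩
  rcases hle.eq_or_lt with heq | hlt
  · exact Or.inl ⟨honestStream_eq_two (by omega), by omega⟩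
  · refine Or.inr ⟨honestStream_eq_one (k := k + 1) (by rw [pow_succ]; omega) (by omega),
      4 * (e - 2 * 2 ^ k), by omega, ?_⟩
    convert endCheck_honestStream hlt using 2
    omega

theorem certificate_honestStream (k : ℕ) : Certificate (honestStream (2 ^ k)) (2 ^ (k + 1)) := by
  have hpos := Nat.one_le_two_pow (n := k)
  refine ⟨Or.inl ?_, fun s _ _ hmark => ?_, ?_⟩
  · convert endCheck_honestStream (e := 2 ^ k) (c := 0) (by omega) using 1
    rw [pow_succ]
    omega
  · obtain ⟨hlt, i, hi⟩ := exists_pow_of_honestStream_eq_one (by simpa using hmark)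
    have hik : i < k := by rwa [hi, Nat.pow_lt_pow_iff_right (by norm_num)] at hlt
    have hle : 2 * 2 ^ i ≤ 2 ^ k := by
      rw [← pow_succ']
      exact Nat.pow_le_pow_right (by norm_num) hik
    refine ⟨5 * 2 ^ i + 4 * (2 ^ k - 2 * 2 ^ i), by rw [pow_succ]; omega, ?_⟩
    rw [Nat.zero_add, hi]
    exact doublingCheck_honestStream hle
  · rcases hpos.eq_or_lt with h1 | h1
    · rw [honestStream_eq_two (by omega)]
      decide
    · rw [honestStream_eq_one (k := 0) rfl (by omega)]
      decide

theorem certificate_const_end_one : Certificate (fun _ => 2) 1 :=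
  ⟨Or.inr ⟨rfl, rfl⟩, scanCheck_of_end rfl, by decide⟩

end Completeness

theorem exists_certificate_iff (m : ℕ) : (∃ u, Certificate u m) ↔ ∃ n, m = 2 ^ n := by
  refine ⟨fun ⟨u, hu⟩ => hu.exists_eq_two_pow, ?_⟩
  rintro ⟨_ | k, rfl⟩
  · exact ⟨_, certificate_const_end_one⟩
  · exact ⟨_, certificate_honestStream k⟩

end UPower

/-- The unary language `UPOWER = {1^m : m = 2^n for some n ≥ 0}` can be
recognized by a PAFA: some PAFA over the unary alphabet `{1}` has language exactly UPOWER. -/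
theorem upower_recognized_by_PAFA :
    ∃ A : PAFA Unit, A.lang = { w : List Unit | ∃ n : ℕ, w.length = 2 ^ n } := by
  refine ⟨UPower.pafa, Set.ext fun w => ?_⟩
  obtain ⟨m, rfl⟩ : ∃ m, w = List.replicate m () :=
    ⟨w.length, List.eq_replicate_iff.2 ⟨rfl, fun _ _ => rfl⟩⟩
  simp only [PAFA.lang, Set.mem_ofPred_eq, UPower.accepts_replicate_iff,
    UPower.exists_certificate_iff, List.length_replicate]
end

section
/- The language TWIN = {w c w : w ∈ {0,1}*} over the alphabet {0,1,c} can be recognized by a PAFA: there exists a PAFA over the alphabet {0,1,c} whose language is exactly TWIN. -/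
/-- The input alphabet {0, 1, c}. -/
inductive TSym : Type
  | zero : TSym
  | one : TSym
  | c : TSym

/-- Encoding of a binary string `w ∈ {0,1}*` (a list of Booleans) as a string over {0,1,c}. -/
def bitToTSym (b : Bool) : TSym := if b then TSym.one else TSym.zero

/-!
The existential player announces a word `u` followed by `c`, one symbol per input symbol. The
universal player privately chooses a side: on the left it checks that the input up to its first
`c` is `u c`, on the right it skips to the first `c` and checks that the rest of the input is
`u ¢`. A strategy sees only the public history, which is the same in both branches, so it must
announce the same word against both halves: the input is accepted iff it is `u c u` with `u`
free of `c`.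
-/

def List.stutter {α : Type*} (l : List α) : List α := l.flatMap fun a => [a, a]

@[simp] theorem List.stutter_nil {α : Type*} : ([] : List α).stutter = [] := rfl

@[simp] theorem List.stutter_cons {α : Type*} (a : α) (l : List α) :
    (a :: l).stutter = a :: a :: l.stutter := rfl

@[simp] theorem List.stutter_append {α : Type*} (l₁ l₂ : List α) :
    (l₁ ++ l₂).stutter = l₁.stutter ++ l₂.stutter := List.flatMap_append

theorem List.exists_cons_eq_append_cons_iff {α : Type*} {a b : α} {x : List α}
    {P : List α → Prop} :
    (∃ u t, a :: x = u ++ b :: t ∧ b ∉ u ∧ P u) ↔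
      (a = b ∧ P []) ∨ (a ≠ b ∧ ∃ u t, x = u ++ b :: t ∧ b ∉ u ∧ P (a :: u)) := by
  constructor
  · rintro ⟨_ | ⟨a', u⟩, t, hx, hb, hP⟩
    · simp_all
    · simp only [List.cons_append, List.cons.injEq, List.mem_cons, not_or] at hx hb
      obtain ⟨rfl, rfl⟩ := hx
      exact .inr ⟨Ne.symm hb.1, u, t, rfl, hb.2, hP⟩
  · rintro (⟨rfl, hP⟩ | ⟨hab, u, t, rfl, hb, hP⟩)
    · exact ⟨[], x, rfl, List.not_mem_nil, hP⟩
    · exact ⟨a :: u, t, rfl, by simp [Ne.symm hab, hb], hP⟩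

section Announces

variable {Γ : Type*}

/-- Started from history `h`, the player who answers `s h'` to every history `h'` plays `l`. -/
def Announces (s : List Γ → Γ) : List Γ → List Γ → Prop
  | _, [] => True
  | h, a :: l => s h = a ∧ Announces s (h ++ [a]) l

theorem Announces.eq_of_append_singleton {s : List Γ → Γ} {h l₁ l₂ : List Γ} {a : Γ}
    (h₁ : Announces s h (l₁ ++ [a])) (h₂ : Announces s h (l₂ ++ [a]))
    (ha₁ : a ∉ l₁) (ha₂ : a ∉ l₂) : l₁ = l₂ := by
  induction l₁ generalizing h l₂ with
  | nil => cases l₂ <;> simp_all [Announces]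
  | cons b l₁ ih =>
    cases l₂ with
    | nil => simp_all [Announces]
    | cons b' l₂ =>
      obtain ⟨rfl, h₁⟩ := h₁
      obtain ⟨rfl, h₂⟩ := h₂
      simp only [List.mem_cons, not_or] at ha₁ ha₂
      rw [ih h₁ h₂ ha₁.2 ha₂.2]

theorem announces_getD (l : List Γ) (d : Γ) : Announces (fun h => l.getD h.length d) [] l := by
  suffices ∀ h l', h ++ l' = l → Announces (fun h => l.getD h.length d) h l' from this [] l rfl
  intro h l' hl
  induction l' generalizing h with
  | nil => trivial
  | cons a l' ih =>
    subst hl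
    exact ⟨by simp, ih (h ++ [a]) (by simp)⟩

end Announces

namespace PAFA

theorem tape_eq_stutter {α : Type} (w : List α) :
    tape w = none :: none :: (w.map some ++ [none]).stutter := rfl

variable {α : Type} (A : PAFA α) (f : A.Strategy) {σ : Option α} {rest : List (Option α)}
  {st : Fin A.kc × Fin A.kp} {h : List (Fin A.g)}

theorem acc_nil : A.Acc f [] st h ↔ st.1 = A.qa := Iff.rfl

theorem acc_cons_of_univ_inl {st' : Fin A.kc × Fin A.kp} (hu : A.isUniv st = true)
    (hδ : A.δU st σ = .inl st') : A.Acc f (σ :: rest) st h ↔ A.Acc f rest st' h := by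
  simp [Acc, Step, hu, hδ]

theorem acc_cons_of_univ_inr {fam : Fin A.g ⊕ Fin A.d → Fin A.kc × Fin A.kp}
    (hu : A.isUniv st = true) (hδ : A.δU st σ = .inr fam) :
    A.Acc f (σ :: rest) st h ↔
      (∀ γ, A.Acc f rest (fam (.inl γ)) (h ++ [γ])) ∧ ∀ δ, A.Acc f rest (fam (.inr δ)) h := by
  simp [Acc, Step, hu, hδ]

theorem acc_cons_of_exist_inr {fam : Fin A.g → Fin A.kc} (hu : A.isUniv st = false)
    (hδ : A.δE st.1 = .inr fam) :
    A.Acc f (σ :: rest) st h ↔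
      A.Acc f rest (fam (f (st.1, h)), st.2) (h ++ [f (st.1, h)]) := by
  simp [Acc, Step, hu, hδ]

end PAFA

def TSym.toFin : TSym → Fin 3
  | .zero => 0
  | .one => 1
  | .c => 2

theorem TSym.toFin_injective : Function.Injective TSym.toFin := by
  intro a b
  cases a <;> cases b <;> simp [TSym.toFin]

theorem TSym.exists_map_bitToTSym_iff {u : List TSym} :
    (∃ w : List Bool, w.map bitToTSym = u) ↔ .c ∉ u := by
  induction u with
  | nil => simp
  | cons a u ih => cases a <;> simp [List.map_eq_cons_iff, ← ih, bitToTSym, Bool.exists_bool]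

namespace TwinPAFA

inductive Side
  | left
  | right
  deriving DecidableEq

instance : Fintype Side := ⟨{.left, .right}, fun p => by cases p <;> simp⟩

theorem Side.forall {P : Side → Prop} : (∀ p, P p) ↔ P .left ∧ P .right :=
  ⟨fun h => ⟨h _, h _⟩, fun h p => by cases p <;> simp [h]⟩

/-- `guess` announces a symbol at the first copy of each tape symbol, `check r` compares the
announcement `r` with the second copy. -/
inductive State
  | start
  | skip
  | guess
  | check (r : Fin 3)
  | waitC
  | accept
  | reject
  deriving DecidableEq, Fintype

open State

def entry : Side → State
  | .left => skip
  | .right => waitC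

/-- An announced `c` ends the word: the left side expects the middle `c` there, the right side
the end-marker ¢. -/
def checkNext (p : Side) (r : Fin 3) : Option TSym → State
  | some .c => if p = .left ∧ r = TSym.c.toFin then accept else reject
  | none => if p = .right ∧ r = TSym.c.toFin then accept else reject
  | some a => if r = a.toFin then guess else reject

def move (p : Side) : State → Option TSym → State
  | skip, _ => guess
  | check r, σ => checkNext p r σ
  | waitC, some .c => skip
  | q, _ => q

noncomputable def stateEquiv : State ≃ Fin (Fintype.card State) := Fintype.equivFin State

noncomputable def sideEquiv : Side ≃ Fin (Fintype.card Side) := Fintype.equivFin Side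

/-- The private moves choose the side to check; the public moves at `start` only fill the family
indexed by `Γ ⊕ Δ` and lead to acceptance. -/
@[reducible] noncomputable def automaton : PAFA TSym where
  kc := Fintype.card State
  kp := Fintype.card Side
  g := 3
  d := Fintype.card Side
  g_ge := by norm_num
  d_ge := by decide
  isUniv s := stateEquiv.symm s.1 != guess
  δE q := if stateEquiv.symm q = guess then .inr fun r => stateEquiv (check r) else .inl q
  δU s σ :=
    if stateEquiv.symm s.1 = start then
      .inr (Sum.elim (fun _ => (stateEquiv accept, s.2))
        fun i => (stateEquiv (entry (sideEquiv.symm i)), i))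
    else .inl (stateEquiv (move (sideEquiv.symm s.2) (stateEquiv.symm s.1) σ), s.2)
  pub_private s σ fam hfam γ := by
    split_ifs at hfam
    cases hfam
    rfl
  init := (stateEquiv start, sideEquiv .left)
  qa := stateEquiv accept

noncomputable def encode (q : State) (p : Side) : Fin automaton.kc × Fin automaton.kp :=
  (stateEquiv q, sideEquiv p)

section Steps

variable (f : automaton.Strategy) {σ : Option TSym} {rest : List (Option TSym)} {p : Side}
  {h : List (Fin 3)}

theorem acc_move {q : State} (hs : q ≠ start) (hg : q ≠ guess) :
    automaton.Acc f (σ :: rest) (encode q p) h ↔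
      automaton.Acc f rest (encode (move p q σ) p) h :=
  automaton.acc_cons_of_univ_inl f (by simp [encode, hg]) (by simp [encode, hs])

theorem acc_check {r : Fin 3} :
    automaton.Acc f (σ :: rest) (encode (check r) p) h ↔
      automaton.Acc f rest (encode (checkNext p r σ) p) h :=
  acc_move f (by simp) (by simp)

theorem acc_guess :
    automaton.Acc f (σ :: rest) (encode guess p) h ↔
      automaton.Acc f rest (encode (check (f (stateEquiv guess, h))) p)
        (h ++ [f (stateEquiv guess, h)]) :=
  automaton.acc_cons_of_exist_inr f (st := encode guess p)
    (fam := fun r => stateEquiv (check r)) (by simp [encode]) (by simp [encode])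

theorem acc_start :
    automaton.Acc f (σ :: rest) (encode start p) h ↔
      (∀ γ, automaton.Acc f rest (encode accept p) (h ++ [γ])) ∧
        automaton.Acc f rest (encode skip .left) h ∧
        automaton.Acc f rest (encode waitC .right) h := by
  rw [automaton.acc_cons_of_univ_inr f (st := encode start p)
    (fam := Sum.elim (fun _ => encode accept p)
      fun i => (stateEquiv (entry (sideEquiv.symm i)), i))
    (by simp [encode]) (by simp [encode]), sideEquiv.surjective.forall]
  simp [encode, Side.forall, entry]

theorem acc_accept (tape : List (Option TSym)) : automaton.Acc f tape (encode accept p) h := by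
  induction tape with
  | nil => rfl
  | cons σ tape ih => exact (acc_move f (by simp) (by simp)).2 ih

theorem not_acc_reject (tape : List (Option TSym)) :
    ¬ automaton.Acc f tape (encode reject p) h := by
  induction tape with
  | nil => simp [PAFA.acc_nil, encode]
  | cons σ tape ih => rwa [acc_move f (by simp) (by simp)]

theorem acc_guess_cons_of_ne_c {a : TSym} (ha : a ≠ .c) :
    automaton.Acc f (σ :: some a :: rest) (encode guess p) h ↔
      f (stateEquiv guess, h) = a.toFin ∧
        automaton.Acc f rest (encode guess p) (h ++ [a.toFin]) := by
  rw [acc_guess, acc_check]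
  by_cases hr : f (stateEquiv guess, h) = a.toFin
  · cases a <;> simp_all [checkNext]
  · cases a <;> simp_all [checkNext, not_acc_reject]

theorem acc_waitC_iff {u : List TSym} (hu : TSym.c ∉ u) (t : List TSym) :
    automaton.Acc f ((u ++ TSym.c :: t).map some ++ [none]).stutter (encode waitC p) h ↔
      automaton.Acc f (t.map some ++ [none]).stutter (encode guess p) h := by
  induction u with
  | nil => simp [acc_move, move]
  | cons a u ih =>
    simp only [List.mem_cons, not_or] at hu
    cases a <;> simp_all [acc_move, move]

end Steps

variable (f : automaton.Strategy)

theorem acc_guess_left_iff (x : List TSym) (h : List (Fin 3)) :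
    automaton.Acc f (x.map some ++ [none]).stutter (encode guess .left) h ↔
      ∃ u t, x = u ++ .c :: t ∧ .c ∉ u ∧
        Announces (fun h => f (stateEquiv guess, h)) h ((u ++ [.c]).map TSym.toFin) := by
  induction x generalizing h with
  | nil => simp [acc_guess, acc_check, checkNext, not_acc_reject]
  | cons a x ih =>
    rw [List.exists_cons_eq_append_cons_iff]
    by_cases ha : a = .c
    · subst ha
      simp only [List.map_cons, List.cons_append, List.stutter_cons, acc_guess, acc_check]
      by_cases hr : f (stateEquiv guess, h) = TSym.c.toFin <;>
        simp [hr, checkNext, Announces, acc_accept, not_acc_reject]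
    · simp only [List.map_cons, List.cons_append, List.stutter_cons,
        acc_guess_cons_of_ne_c f ha, ih]
      simp [ha, Announces, ← exists_and_left, and_left_comm]

theorem acc_guess_right_iff (x : List TSym) (h : List (Fin 3)) :
    automaton.Acc f (x.map some ++ [none]).stutter (encode guess .right) h ↔
      .c ∉ x ∧
        Announces (fun h => f (stateEquiv guess, h)) h ((x ++ [TSym.c]).map TSym.toFin) := by
  induction x generalizing h with
  | nil =>
    simp only [List.map_nil, List.nil_append, List.stutter_cons, List.stutter_nil, acc_guess,
      acc_check]
    by_cases hr : f (stateEquiv guess, h) = TSym.c.toFin <;>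
      simp [hr, checkNext, Announces, acc_accept, not_acc_reject]
  | cons a x ih =>
    by_cases ha : a = .c
    · subst ha
      simp [acc_guess, acc_check, checkNext, not_acc_reject]
    · simp only [List.map_cons, List.cons_append, List.stutter_cons,
        acc_guess_cons_of_ne_c f ha, ih]
      simp [Ne.symm ha, Announces, and_left_comm]

theorem accepts_iff_exists_strategy (x : List TSym) :
    automaton.Accepts x ↔ ∃ f : automaton.Strategy,
      automaton.Acc f (x.map some ++ [none]).stutter (encode guess .left) [] ∧
        automaton.Acc f (x.map some ++ [none]).stutter (encode waitC .right) [] := by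
  refine exists_congr fun f => ?_
  rw [PAFA.tape_eq_stutter, show automaton.init = encode start .left from rfl, acc_start]
  simp [acc_accept, acc_move, move]

theorem accepts_iff (x : List TSym) :
    automaton.Accepts x ↔ ∃ u, .c ∉ u ∧ x = u ++ .c :: u := by
  have hmem {u : List TSym} (hu : TSym.c ∉ u) : TSym.c.toFin ∉ u.map TSym.toFin :=
    (List.mem_map_of_injective TSym.toFin_injective).not.2 hu
  rw [accepts_iff_exists_strategy]
  constructor
  · rintro ⟨f, hL, hR⟩
    obtain ⟨u, t, rfl, hu, hLann⟩ := (acc_guess_left_iff f x []).1 hL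
    obtain ⟨ht, hRann⟩ := (acc_guess_right_iff f t []).1 ((acc_waitC_iff f hu t).1 hR)
    rw [List.map_append] at hLann hRann
    have hut := Announces.eq_of_append_singleton hLann hRann (hmem hu) (hmem ht)
    exact ⟨u, hu, by rw [(List.map_inj_right fun _ _ h => TSym.toFin_injective h).1 hut]⟩
  · rintro ⟨u, hu, rfl⟩
    have hann := announces_getD ((u ++ [TSym.c]).map TSym.toFin) 0
    refine ⟨fun q => ((u ++ [TSym.c]).map TSym.toFin).getD q.2.length 0, ?_, ?_⟩
    · exact (acc_guess_left_iff _ _ []).2 ⟨u, u, rfl, hu, hann⟩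
    · exact (acc_waitC_iff _ hu u).2 ((acc_guess_right_iff _ u []).2 ⟨hu, hann⟩)

end TwinPAFA

/-- The language `TWIN = { w c w : w ∈ {0,1}* }` over the alphabet `{0,1,c}`
can be recognized by a PAFA. -/
theorem twin_recognized_by_PAFA :
    ∃ A : PAFA TSym,
      A.lang = { x : List TSym | ∃ w : List Bool,
        x = w.map bitToTSym ++ TSym.c :: w.map bitToTSym } := by
  refine ⟨TwinPAFA.automaton, Set.ext fun x => ?_⟩
  rw [PAFA.lang, Set.mem_ofPred_eq, TwinPAFA.accepts_iff, Set.mem_ofPred_eq]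
  constructor
  · rintro ⟨u, hu, rfl⟩
    obtain ⟨w, rfl⟩ := TSym.exists_map_bitToTSym_iff.2 hu
    exact ⟨w, rfl⟩
  · rintro ⟨w, rfl⟩
    exact ⟨_, TSym.exists_map_bitToTSym_iff.1 ⟨w, rfl⟩, rfl⟩
end

section
/- The language USQUARE = {1^m : m = n^2 for some n ≥ 0} can be recognized by a PA1CA: there exists a PA1CA over the unary alphabet {1} whose language is exactly USQUARE. -/
/-!
A realtime private alternating one-counter automaton (PA1CA) over input alphabet `α`:
a realtime private alternating finite automaton (PAFA) augmented with an integer counter,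
initialized to 0, that is accessible only to the universal transitions.

* Common state components: `Fin kc`; private state components: `Fin kp`.
* Public game alphabet Γ = `Fin g`, private game alphabet Δ = `Fin d` (disjoint by
  construction, being the two summands of `Fin g ⊕ Fin d`), each of size at least 2.
* Tape symbols: `Option α`, with `none` the end-marker ¢.
* The counter status is a `Bool` (`true` means the counter is zero); counter increments are
  encoded as `Fin 3`, with `d : Fin 3` denoting the integer `(d : ℤ) - 1`, one of −1, 0, +1.
* Existential transitions depend only on the common component (neither reading nor modifying
  the counter and not seeing the tape symbol); universal transitions additionally depend on
  the counter status, and each universal successor specifies a counter increment.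
* Transitions return either a single successor (`Sum.inl`, a non-branching move) or a family
  of successors indexed by the relevant game alphabet (`Sum.inr`, a branching move).
* On input `w`, the automaton processes ¢ w ¢, making two transitions per tape symbol; this is
  realized by listing every tape symbol twice, one occurrence per transition.
-/
structure PA1CA (α : Type) where
  kc : ℕ
  kp : ℕ
  g : ℕ
  d : ℕ
  g_ge : 2 ≤ g
  d_ge : 2 ≤ d
  /-- the set of universal states (`true` = universal; the rest are existential) -/
  isUniv : Fin kc × Fin kp → Bool
  /-- existential transition function -/
  δE : Fin kc → Fin kc ⊕ (Fin g → Fin kc)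
  /-- universal transition function; the last `Bool` argument is the counter status -/
  δU : Fin kc × Fin kp → Option α → Bool →
    ((Fin kc × Fin kp) × Fin 3) ⊕ ((Fin g ⊕ Fin d) → (Fin kc × Fin kp) × Fin 3)
  /-- successors of universal branching moves indexed by public symbols have private component
  equal to the current one -/
  pub_private : ∀ s σ z fam, δU s σ z = Sum.inr fam →
    ∀ γ : Fin g, ((fam (Sum.inl γ)).1).2 = s.2
  /-- the initial state (s_{c0}, s_{p0}) -/
  init : Fin kc × Fin kp
  /-- the accepting common component q_a -/
  qa : Fin kc

namespace PA1CA

variable {α : Type} (A : PA1CA α)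

/-- An existential strategy: assigns a public game symbol to each pair of a common state
component and a finite sequence over Γ (the public moves seen so far). -/
abbrev Strategy := Fin A.kc × List (Fin A.g) → Fin A.g

/-- One transition from state `st` with counter value `c` and public-move history `h`,
reading tape symbol `σ`: existential branchings are resolved by the strategy `f`, universal
branchings are resolved in all possible ways, and `P` is the property required of each
successor configuration (with updated counter and history).  Non-branching moves leave the
history unchanged; branching moves labeled by public symbols append their Γ-label to the
history; private universal moves leave it unchanged.  Existential moves do not read or modify
the counter. -/
def Step (f : A.Strategy) (σ : Option α) (st : Fin A.kc × Fin A.kp) (c : ℤ)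
    (h : List (Fin A.g))
    (P : Fin A.kc × Fin A.kp → ℤ → List (Fin A.g) → Prop) : Prop :=
  if A.isUniv st then
    match A.δU st σ (decide (c = 0)) with
    | Sum.inl t => P t.1 (c + (t.2 : ℤ) - 1) h
    | Sum.inr fam =>
        (∀ γ : Fin A.g,
          P (fam (Sum.inl γ)).1 (c + ((fam (Sum.inl γ)).2 : ℤ) - 1) (h ++ [γ])) ∧
        (∀ δ' : Fin A.d,
          P (fam (Sum.inr δ')).1 (c + ((fam (Sum.inr δ')).2 : ℤ) - 1) h)
  else
    match A.δE st.1 with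
    | Sum.inl c' => P (c', st.2) c h
    | Sum.inr fam => P (fam (f (st.1, h)), st.2) c (h ++ [f (st.1, h)])

/-- All computation paths consistent with strategy `f`, from state `st`, counter `c`, history
`h`, on the given remaining tape (each tape symbol occurring twice, one occurrence per
transition), end in a state whose common component is `A.qa`. -/
def Acc (f : A.Strategy) :
    List (Option α) → Fin A.kc × Fin A.kp → ℤ → List (Fin A.g) → Prop
  | [], st, _, _ => st.1 = A.qa
  | σ :: rest, st, c, h => A.Step f σ st c h fun st' c' h' => Acc f rest st' c' h'

/-- The tape ¢ w ¢ with every tape symbol listed twice (two transitions per tape symbol);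
`none` is the end-marker ¢. -/
def tape (w : List α) : List (Option α) :=
  (none :: (w.map some) ++ [none]).flatMap fun σ => [σ, σ]

/-- `A` accepts `w` iff there is an existential strategy under which every consistent
computation path (with the counter initialized to 0) ends in a state with accepting common
component. -/
def Accepts (w : List α) : Prop :=
  ∃ f : A.Strategy, A.Acc f (tape w) A.init 0 []

/-- The language of `A`. -/
def lang : Set (List α) := { w | A.Accepts w }

end PA1CA

/-!
The existential player cuts the input `1^m` into blocks by marking the last symbol of each
block. The universal player privately chooses, at the start and after every mark, either to keep
scanning or to verify the block ahead against the following one: it counts the block up on the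
counter, skips one symbol, and counts down through the next block, demanding that the counter
hits zero exactly at its mark. As this choice is hidden, the marking must pass every check, so it
is accepted iff its blocks have lengths `1, 3, 5, …, 2n - 1` and the input ends at a mark, that
is, iff `m = n ^ 2`.
-/

theorem List.exists_eq_replicate_false_or_append_true_cons (L : List Bool) :
    ∃ k, L = replicate k false ∨ ∃ L', L = replicate k false ++ true :: L' := by
  induction L with
  | nil => exact ⟨0, .inl rfl⟩
  | cons b L ih =>
    cases b
    · obtain ⟨k, rfl | ⟨L', rfl⟩⟩ := ih
      · exact ⟨k + 1, .inl rfl⟩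
      · exact ⟨k + 1, .inr ⟨L', rfl⟩⟩
    · exact ⟨0, .inr ⟨L, rfl⟩⟩

namespace USquare

/-- The private component of the universal player. In `first` the next symbol must be marked;
`atMark` and `inBlock` scan, the input may end in the former only; `countUp`, `skip` and
`countDown` verify a pair of consecutive blocks. -/
inductive Mode
  | first | atMark | inBlock | countUp | skip | countDown
  deriving DecidableEq

instance : Fintype Mode where
  elems := {.first, .atMark, .inBlock, .countUp, .skip, .countDown}
  complete m := by cases m <;> simp

/-- The universal player's move on a symbol with mark `b` and counter `c`; the continuation `K`
is what the resulting mode and counter must satisfy. -/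
def Mode.step : Mode → Bool → ℤ → (Mode → ℤ → Prop) → Prop
  | .first, b, c, K => if b then K .atMark c ∧ K .countUp c else False
  | .atMark, b, c, K => if b then K .atMark c ∧ K .countUp c else K .inBlock c
  | .inBlock, b, c, K => if b then K .atMark c ∧ K .countUp c else K .inBlock c
  | .countUp, b, c, K => if b then K .skip (c + 1) else K .countUp (c + 1)
  | .skip, b, c, K => if b then False else K .countDown c
  | .countDown, b, c, K => if b then c = 0 else K .countDown (c - 1)

/-- Every branch of the universal player, started in mode `m` with counter `c` on input symbols
with marks `L`, accepts. -/
def Mode.Accepts : List Bool → Mode → ℤ → Prop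
  | [], m, _ => m ≠ .inBlock
  | b :: L, m, c => m.step b c (Mode.Accepts L)

namespace Mode

theorem accepts_cons (b : Bool) (L : List Bool) (m : Mode) (c : ℤ) :
    Accepts (b :: L) m c = m.step b c (Accepts L) := rfl

theorem accepts_countDown_block (k : ℕ) (L : List Bool) (c : ℤ) :
    Accepts (List.replicate k false ++ true :: L) countDown c ↔ c = k := by
  induction k generalizing c with
  | zero => simp [accepts_cons, step]
  | succ k ih =>
    simp only [List.replicate_succ, List.cons_append, accepts_cons, step, Bool.false_eq_true,
      ↓reduceIte, ih, Nat.cast_add, Nat.cast_one]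
    omega

theorem accepts_countUp_block (k : ℕ) (L : List Bool) (c : ℤ) :
    Accepts (List.replicate k false ++ true :: L) countUp c ↔ Accepts L skip (c + k + 1) := by
  induction k generalizing c with
  | zero => simp [accepts_cons, step]
  | succ k ih =>
    simp only [List.replicate_succ, List.cons_append, accepts_cons, step, Bool.false_eq_true,
      ↓reduceIte, ih, Nat.cast_add, Nat.cast_one]
    ring_nf

theorem accepts_skip_block (k ℓ : ℕ) (L : List Bool) :
    Accepts (List.replicate k false ++ true :: L) skip ℓ ↔ k = ℓ + 1 := by
  cases k with
  | zero => simp [accepts_cons, step]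
  | succ k =>
    simp only [List.replicate_succ, List.cons_append, accepts_cons, step, Bool.false_eq_true,
      ↓reduceIte, accepts_countDown_block]
    omega

theorem accepts_scan_block {m : Mode} (hm : m = atMark ∨ m = inBlock) (k : ℕ) (L : List Bool)
    (c : ℤ) :
    Accepts (List.replicate k false ++ true :: L) m c ↔
      Accepts L atMark c ∧ Accepts L countUp c := by
  induction k generalizing m with
  | zero => rcases hm with rfl | rfl <;> simp [accepts_cons, step]
  | succ k ih => rcases hm with rfl | rfl <;> simp [List.replicate_succ, accepts_cons, step, ih]

theorem accepts_scan_replicate {m : Mode} (hm : m = atMark ∨ m = inBlock) (k : ℕ) (c : ℤ) :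
    Accepts (List.replicate k false) m c ↔ k = 0 ∧ m = atMark := by
  induction k generalizing m with
  | zero => rcases hm with rfl | rfl <;> simp [Accepts]
  | succ k ih => rcases hm with rfl | rfl <;> simp [List.replicate_succ, accepts_cons, step, ih]

end Mode

open Mode

def blocks : ℕ → ℕ → List Bool
  | 0, _ => []
  | j + 1, a => List.replicate a false ++ true :: blocks j (a + 2)

theorem length_blocks (j a : ℕ) : (blocks j a).length = j * (a + j) := by
  induction j generalizing a with
  | zero => simp [blocks]
  | succ j ih =>
    simp only [blocks, List.length_append, List.length_replicate, List.length_cons, ih]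
    ring

theorem eq_blocks_of_accepts (ℓ : ℕ) (L : List Bool) (hM : Accepts L atMark 0)
    (hU : Accepts L countUp 0) (hS : Accepts L skip ℓ) : ∃ j, L = blocks j (ℓ + 1) := by
  induction hn : L.length using Nat.strong_induction_on generalizing L ℓ with
  | _ n ih =>
    obtain ⟨k, rfl | ⟨L', rfl⟩⟩ := L.exists_eq_replicate_false_or_append_true_cons
    · obtain ⟨rfl, -⟩ := (accepts_scan_replicate (.inl rfl) k 0).mp hM
      exact ⟨0, rfl⟩
    · rw [accepts_scan_block (.inl rfl)] at hM
      rw [accepts_countUp_block] at hU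
      rw [accepts_skip_block] at hS
      subst hS
      have hU' : Accepts L' skip (ℓ + 2 : ℕ) := by convert hU using 2; push_cast; ring
      have hlt : L'.length < n := by
        simp only [← hn, List.length_append, List.length_replicate, List.length_cons]
        omega
      obtain ⟨j, rfl⟩ := ih L'.length hlt (ℓ + 2) L' hM.1 hM.2 hU' rfl
      exact ⟨j + 1, rfl⟩

theorem accepts_blocks (j ℓ : ℕ) :
    Accepts (blocks j (ℓ + 1)) atMark 0 ∧ Accepts (blocks j (ℓ + 1)) countUp 0 ∧
      Accepts (blocks j (ℓ + 1)) skip ℓ := by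
  induction j generalizing ℓ with
  | zero => simp [blocks, Accepts]
  | succ j ih =>
    obtain ⟨hM, hU, hS⟩ := ih (ℓ + 2)
    rw [blocks, accepts_scan_block (.inl rfl), accepts_countUp_block, accepts_skip_block]
    refine ⟨⟨hM, hU⟩, ?_, rfl⟩
    convert hS using 2
    push_cast
    ring

theorem accepts_first_and_countUp_iff (L : List Bool) :
    Accepts L first 0 ∧ Accepts L countUp 0 ↔ ∃ j, L = blocks j 0 := by
  constructor
  · rintro ⟨hF, hU⟩
    rcases L with _ | ⟨_ | _, L⟩
    · exact ⟨0, rfl⟩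
    · simp [accepts_cons, step] at hF
    · simp only [accepts_cons, step, if_true] at hF hU
      obtain ⟨j, rfl⟩ := eq_blocks_of_accepts 1 L hF.1 hF.2 (by simpa using hU)
      exact ⟨j + 1, rfl⟩
  · rintro ⟨_ | j, rfl⟩
    · simp [blocks, Accepts]
    · obtain ⟨hM, hU, hS⟩ := accepts_blocks j 1
      simp only [blocks, List.replicate_zero, List.nil_append, accepts_cons, step, if_true]
      exact ⟨⟨hM, hU⟩, by simpa using hS⟩

/-- The common component. The two copies of the initial `¢` are read in `start` and `start'`;
`guess` is the only existential component, where the existential player decides whether the next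
symbol is marked, and `unmarked`, `marked` then read that symbol. -/
inductive Ctrl
  | start | start' | guess | unmarked | marked | accept | reject
  deriving DecidableEq

instance : Fintype Ctrl where
  elems := {.start, .start', .guess, .unmarked, .marked, .accept, .reject}
  complete c := by cases c <;> simp

/-- The public branch must keep the private component, so it is wasted on the accepting sink. -/
def fork (m : Mode) (next : Ctrl) (m₀ m₁ : Mode) : Fin 2 ⊕ Fin 2 → (Ctrl × Mode) × Fin 3
  | .inl _ => ((.accept, m), 1)
  | .inr δ => ((next, if δ = 0 then m₀ else m₁), 1)

/-- The counter increment `d : Fin 3` stands for `d - 1`. -/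
def univ : Ctrl → Mode → Option Unit → Bool →
    (Ctrl × Mode) × Fin 3 ⊕ (Fin 2 ⊕ Fin 2 → (Ctrl × Mode) × Fin 3)
  | .start, m, _, _ => .inr (fork m .start' .first .countUp)
  | .start', m, _, _ => .inl ((.guess, m), 1)
  | .unmarked, m, none, _ | .marked, m, none, _ =>
      .inl ((if m = .inBlock then .reject else .accept, m), 1)
  | .unmarked, .first, some _, _ => .inl ((.reject, .first), 1)
  | .unmarked, .atMark, some _, _ | .unmarked, .inBlock, some _, _ =>
      .inl ((.guess, .inBlock), 1)
  | .unmarked, .countUp, some _, _ => .inl ((.guess, .countUp), 2)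
  | .unmarked, .skip, some _, _ => .inl ((.guess, .countDown), 1)
  | .unmarked, .countDown, some _, _ => .inl ((.guess, .countDown), 0)
  | .marked, .countUp, some _, _ => .inl ((.guess, .skip), 2)
  | .marked, .skip, some _, _ => .inl ((.reject, .skip), 1)
  | .marked, .countDown, some _, z => .inl ((if z then .accept else .reject, .countDown), 1)
  | .marked, m, some _, _ => .inr (fork m .guess .atMark .countUp)
  | c, m, _, _ => .inl ((c, m), 1)

theorem univ_public_mode {c : Ctrl} {m : Mode} {σ : Option Unit} {z : Bool} {fam}
    (h : univ c m σ z = .inr fam) (γ : Fin 2) : (fam (.inl γ)).1.2 = m := by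
  cases c <;> cases m <;> cases σ <;> simp [univ] at h <;> subst h <;> rfl

noncomputable def ctrlFin : Ctrl ≃ Fin (Fintype.card Ctrl) := Fintype.equivFin Ctrl

noncomputable def modeFin : Mode ≃ Fin (Fintype.card Mode) := Fintype.equivFin Mode

noncomputable abbrev state (c : Ctrl) (m : Mode) :
    Fin (Fintype.card Ctrl) × Fin (Fintype.card Mode) :=
  (ctrlFin c, modeFin m)

noncomputable def encode (x : (Ctrl × Mode) × Fin 3) :
    (Fin (Fintype.card Ctrl) × Fin (Fintype.card Mode)) × Fin 3 :=
  (state x.1.1 x.1.2, x.2)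

@[reducible] noncomputable def usquare : PA1CA Unit where
  kc := Fintype.card Ctrl
  kp := Fintype.card Mode
  g := 2
  d := 2
  g_ge := le_rfl
  d_ge := le_rfl
  isUniv s := decide (ctrlFin.symm s.1 ≠ .guess)
  δE c := if ctrlFin.symm c = .guess then
      .inr fun γ => ctrlFin (if γ = 1 then .marked else .unmarked)
    else .inl c
  δU s σ z := (univ (ctrlFin.symm s.1) (modeFin.symm s.2) σ z).map encode (encode ∘ ·)
  pub_private s σ z fam h γ := by
    rcases hu : univ (ctrlFin.symm s.1) (modeFin.symm s.2) σ z with x | fam'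
    · simp [hu] at h
    · simp only [hu, Sum.map_inr, Sum.inr.injEq] at h
      simp [← h, encode, state, univ_public_mode hu]
  init := state .start .first
  qa := ctrlFin .accept

section Run

variable (f : usquare.Strategy)

theorem acc_accept (L : List (Option Unit)) (m : Mode) (n : ℤ) (h : List (Fin 2)) :
    usquare.Acc f L (state .accept m) n h := by
  induction L generalizing n with
  | nil => simp [PA1CA.Acc]
  | cons σ L ih => cases σ <;> simp [PA1CA.Acc, PA1CA.Step, univ, encode, ih]

theorem not_acc_reject (L : List (Option Unit)) (m : Mode) (n : ℤ) (h : List (Fin 2)) :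
    ¬ usquare.Acc f L (state .reject m) n h := by
  induction L generalizing n with
  | nil => simp [PA1CA.Acc]
  | cons σ L ih => cases σ <;> simp [PA1CA.Acc, PA1CA.Step, univ, encode, ih]

theorem acc_start (L : List (Option Unit)) :
    usquare.Acc f (none :: none :: L) (state .start .first) 0 [] ↔
      usquare.Acc f L (state .guess .first) 0 [] ∧
        usquare.Acc f L (state .guess .countUp) 0 [] := by
  simp [PA1CA.Acc, PA1CA.Step, univ, fork, encode, Fin.forall_fin_two, acc_accept]

theorem acc_input (L : List (Option Unit)) (m : Mode) (n : ℤ) (h : List (Fin 2)) :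
    usquare.Acc f (some () :: some () :: L) (state .guess m) n h ↔
      m.step (f (ctrlFin .guess, h) = 1) n fun m' n' =>
        usquare.Acc f L (state .guess m') n' (h ++ [f (ctrlFin .guess, h)]) := by
  obtain hγ | hγ : f (ctrlFin .guess, h) = 0 ∨ f (ctrlFin .guess, h) = 1 :=
    Fin.exists_fin_two.mp ⟨_, rfl⟩
  all_goals cases m <;> by_cases hn : n = 0 <;>
    simp [PA1CA.Acc, PA1CA.Step, Mode.step, univ, fork, encode, hγ, hn, add_sub_assoc,
      acc_accept, not_acc_reject]

theorem acc_end (m : Mode) (n : ℤ) (h : List (Fin 2)) :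
    usquare.Acc f [none, none] (state .guess m) n h ↔ m ≠ .inBlock := by
  obtain hγ | hγ : f (ctrlFin .guess, h) = 0 ∨ f (ctrlFin .guess, h) = 1 :=
    Fin.exists_fin_two.mp ⟨_, rfl⟩
  all_goals cases m <;> simp [PA1CA.Acc, PA1CA.Step, univ, encode, hγ]

noncomputable def marks : List (Fin 2) → ℕ → List Bool
  | _, 0 => []
  | h, j + 1 => (f (ctrlFin .guess, h) = 1) :: marks (h ++ [f (ctrlFin .guess, h)]) j

theorem length_marks (h : List (Fin 2)) (j : ℕ) : (marks f h j).length = j := by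
  induction j generalizing h <;> simp [marks, *]

theorem acc_iff_accepts_marks (j : ℕ) (h : List (Fin 2)) (m : Mode) (n : ℤ) :
    usquare.Acc f (List.replicate (2 * j) (some ()) ++ [none, none]) (state .guess m) n h ↔
      Accepts (marks f h j) m n := by
  induction j generalizing h m n with
  | zero => simp [marks, Accepts, acc_end]
  | succ j ih =>
    rw [show 2 * (j + 1) = 2 * j + 1 + 1 by ring]
    simp only [List.replicate_succ, List.cons_append, acc_input, ih, marks, accepts_cons]

end Run

theorem tape_eq (w : List Unit) :
    PA1CA.tape w = none :: none :: (List.replicate (2 * w.length) (some ()) ++ [none, none]) := by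
  have hw : (w.map some).flatMap (fun σ => [σ, σ]) = List.replicate (2 * w.length) (some ()) := by
    induction w with
    | nil => rfl
    | cons a w ih => simp [ih, Nat.mul_succ, List.replicate_succ]
  simp [PA1CA.tape, hw]

theorem accepts_iff_exists_strategy (w : List Unit) :
    usquare.Accepts w ↔ ∃ f : usquare.Strategy,
      Accepts (marks f [] w.length) first 0 ∧ Accepts (marks f [] w.length) countUp 0 := by
  refine exists_congr fun f => ?_
  rw [tape_eq, show usquare.init = state .start .first from rfl, acc_start,
    acc_iff_accepts_marks, acc_iff_accepts_marks]

noncomputable def strategyOf (L : List Bool) : usquare.Strategy :=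
  fun q => if L.getD q.2.length false then 1 else 0

theorem marks_strategyOf (L : List Bool) (j : ℕ) (h : List (Fin 2))
    (hj : h.length + j = L.length) : marks (strategyOf L) h j = L.drop h.length := by
  induction j generalizing h with
  | zero => simp [marks, List.drop_eq_nil_of_le, ← hj]
  | succ j ih =>
    have hlt : h.length < L.length := by omega
    rw [marks, ih _ (by simp only [List.length_append, List.length_singleton]; omega),
      List.drop_eq_getElem_cons hlt]
    cases hb : L[h.length] <;> simp [strategyOf, List.getElem?_eq_getElem hlt, hb]

theorem accepts_iff_exists_marks (w : List Unit) :
    usquare.Accepts w ↔ ∃ L : List Bool, L.length = w.length ∧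
      Accepts L first 0 ∧ Accepts L countUp 0 := by
  rw [accepts_iff_exists_strategy]
  constructor
  · rintro ⟨f, hf⟩
    exact ⟨_, length_marks f [] _, hf⟩
  · rintro ⟨L, hL, hL'⟩
    refine ⟨strategyOf L, ?_⟩
    rwa [marks_strategyOf L _ [] (by simp [hL]), List.length_nil, List.drop_zero]

theorem usquare_accepts_iff (w : List Unit) :
    usquare.Accepts w ↔ ∃ n : ℕ, w.length = n ^ 2 := by
  simp only [accepts_iff_exists_marks, accepts_first_and_countUp_iff]
  constructor
  · rintro ⟨_, hL, n, rfl⟩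
    exact ⟨n, by rw [← hL, length_blocks]; ring⟩
  · rintro ⟨n, hn⟩
    exact ⟨blocks n 0, by rw [hn, length_blocks]; ring, n, rfl⟩

end USquare

/-- The unary language `USQUARE = {1^m : m = n^2 for some n ≥ 0}` can be
recognized by a PA1CA: some PA1CA over the unary alphabet `{1}` has language exactly
USQUARE. -/
theorem usquare_recognized_by_PA1CA :
    ∃ A : PA1CA Unit, A.lang = { w : List Unit | ∃ n : ℕ, w.length = n ^ 2 } :=
  ⟨USquare.usquare, Set.ext USquare.usquare_accepts_iff⟩
end

section
/- The language USQUARE = {1^m : m = n^2 for some n ≥ 0} can be recognized by a two-alternating AQFA: there exists an AQFA over the unary alphabet {1}, in which along every path of every computation tree no universal classical state is ever followed by an existential classical state, whose language is exactly USQUARE. -/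
noncomputable section

open Matrix

/-!
A realtime alternating quantum finite automaton (AQFA) over input alphabet `α`.

* Classical states: `Fin m`, partitioned into existential and universal states by `isUniv`,
  with initial classical state `c₀` and accepting classical states `acceptC`.
* Quantum register: basis states indexed by `Fin n`, initial quantum state the unit vector `v₀`.
* For each classical state and tape symbol, a superoperator is given by a finite list of
  outcomes, each consisting of an n×n operation element together with a next classical state;
  the operation elements `E` satisfy `Σ Eᴴ E = I`.
* Tape symbols: `Option α`, with `none` the end-marker ¢.
* On input `w`, the automaton processes ¢ w ¢, making two transitions per tape symbol; this is
  realized by listing every tape symbol twice, one occurrence per transition.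
-/
structure AQFA (α : Type) where
  m : ℕ
  n : ℕ
  /-- which classical states are universal (`true`); the rest are existential -/
  isUniv : Fin m → Bool
  /-- the initial classical state -/
  c₀ : Fin m
  /-- the accepting classical states -/
  acceptC : Fin m → Bool
  /-- the initial quantum state -/
  v₀ : Fin n → ℂ
  /-- the initial quantum state is a unit vector -/
  v₀_unit : ∑ i, Complex.normSq (v₀ i) = 1
  /-- for each classical state and tape symbol, the list of outcomes: operation elements
  paired with next classical states -/
  trans : Fin m → Option α → List (Matrix (Fin n) (Fin n) ℂ × Fin m)
  /-- the superoperator condition `Σ_k E_kᴴ E_k = I` -/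
  valid : ∀ (c : Fin m) (σ : Option α),
    ((trans c σ).map fun p => (p.1)ᴴ * p.1).sum = (1 : Matrix (Fin n) (Fin n) ℂ)

namespace AQFA

variable {α : Type} (A : AQFA α)

/-- The tape ¢ w ¢ with every tape symbol listed twice (two transitions per tape symbol);
`none` is the end-marker ¢. -/
def tape (w : List α) : List (Option α) :=
  (none :: (w.map some) ++ [none]).flatMap fun σ => [σ, σ]

/-- AND–OR evaluation of the computation tree from the node with classical state `cfg.1` and
(unnormalized, nonzero) quantum state `cfg.2`, on the given remaining tape (each tape symbol
occurring twice, one occurrence per transition).  A leaf is true iff its classical state is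
accepting; an existential node is true iff some child is true; a universal node is true iff
all children are true; the children are indexed by the outcomes `p` with `p.1 *ᵥ v ≠ 0`. -/
def Acc : List (Option α) → Fin A.m × (Fin A.n → ℂ) → Prop
  | [], cfg => A.acceptC cfg.1
  | σ :: rest, (c, v) =>
      if A.isUniv c then
        ∀ p ∈ A.trans c σ, p.1.mulVec v ≠ 0 → Acc rest (p.2, p.1.mulVec v)
      else
        ∃ p ∈ A.trans c σ, p.1.mulVec v ≠ 0 ∧ Acc rest (p.2, p.1.mulVec v)

/-- `A` accepts `w` iff the root of the computation tree on ¢ w ¢ evaluates to true. -/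
def Accepts (w : List α) : Prop :=
  A.Acc (tape w) (A.c₀, A.v₀)

/-- The language of `A`. -/
def lang : Set (List α) := { w | A.Accepts w }

/-- The nodes of the computation tree of `A` on input `w`, presented as pairs of a
configuration (classical state, unnormalized quantum state) and the remaining tape. -/
inductive Reach (w : List α) : (Fin A.m × (Fin A.n → ℂ)) × List (Option α) → Prop
  | base : Reach w ((A.c₀, A.v₀), tape w)
  | step {c : Fin A.m} {v : Fin A.n → ℂ} {σ : Option α} {rest : List (Option α)}
      (p : Matrix (Fin A.n) (Fin A.n) ℂ × Fin A.m) :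
      Reach w ((c, v), σ :: rest) → p ∈ A.trans c σ → p.1.mulVec v ≠ 0 →
      Reach w ((p.2, p.1.mulVec v), rest)

/-- `A` is two-alternating: along every path of every computation tree, no universal classical
state is ever followed by an existential classical state (equivalently, the sequence of
visited classical states is a block of existential states followed by a block of universal
states). -/
def TwoAlternating : Prop :=
  ∀ (w : List α) (c : Fin A.m) (v : Fin A.n → ℂ) (σ : Option α) (rest : List (Option α)),
    A.Reach w ((c, v), σ :: rest) → A.isUniv c →
      ∀ p ∈ A.trans c σ, p.1.mulVec v ≠ 0 → A.isUniv p.2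

end AQFA


/-!
The register `(s, s j, s z)` stores two integer counters `j, z` scaled by a nonzero amplitude `s`.
On each of the `2ℓ` transitions over `1^ℓ` the automaton guesses existentially one of two moves,
`z ↦ z + 1` or `(j, z) ↦ (j + 1, z - 1 - 4j)`; starting from `j = z = 0`, a run with `d` moves of
the second kind ends with `z = 2ℓ - 2d²`, so some run ends with `z = 0` iff `ℓ` is a square.
On the final end-marker a universal state measures the `z`-coordinate: the branch of that outcome
is rejecting, so it must vanish, i.e. `z = 0`. The two moves are operation elements scaled by
`1/5`, completed to a superoperator by rank-one leaks into a rejecting sink. The only universal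
states are the tester and two sinks, whence two-alternation.
-/

namespace AQFA

variable {α : Type} (A : AQFA α)

theorem acc_cons_of_isUniv {c : Fin A.m} (hc : A.isUniv c = true) (σ : Option α)
    (rest : List (Option α)) (v : Fin A.n → ℂ) :
    A.Acc (σ :: rest) (c, v) ↔ ∀ p ∈ A.trans c σ, p.1 *ᵥ v ≠ 0 → A.Acc rest (p.2, p.1 *ᵥ v) := by
  simp [Acc, hc]

theorem acc_cons_of_not_isUniv {c : Fin A.m} (hc : A.isUniv c = false) (σ : Option α)
    (rest : List (Option α)) (v : Fin A.n → ℂ) :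
    A.Acc (σ :: rest) (c, v) ↔ ∃ p ∈ A.trans c σ, p.1 *ᵥ v ≠ 0 ∧ A.Acc rest (p.2, p.1 *ᵥ v) := by
  simp [Acc, hc]

theorem acc_cons_of_trans_eq_one {c c' : Fin A.m} {σ : Option α} (h : A.trans c σ = [(1, c')])
    (rest : List (Option α)) {v : Fin A.n → ℂ} (hv : v ≠ 0) :
    A.Acc (σ :: rest) (c, v) ↔ A.Acc rest (c', v) := by
  cases hc : A.isUniv c <;> simp [Acc, hc, h, hv]

theorem not_acc_of_trap {c : Fin A.m} (hc : A.isUniv c = false) (hacc : A.acceptC c = false)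
    (htrap : ∀ σ, ∀ p ∈ A.trans c σ, p.2 = c) (l : List (Option α)) (v : Fin A.n → ℂ) :
    ¬ A.Acc l (c, v) := by
  induction l generalizing v with
  | nil => simp [Acc, hacc]
  | cons σ rest ih =>
    rw [A.acc_cons_of_not_isUniv hc]
    rintro ⟨p, hp, -, h⟩
    exact ih _ (htrap σ p hp ▸ h)

theorem twoAlternating_of_isUniv_trans
    (h : ∀ c σ, A.isUniv c → ∀ p ∈ A.trans c σ, A.isUniv p.2) : A.TwoAlternating :=
  fun _ c _ σ _ _ hc p hp _ => h c σ hc p hp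

end AQFA

theorem AQFA.tape_unit (w : List Unit) :
    AQFA.tape w = none :: none :: (List.replicate (2 * w.length) (some ()) ++ [none, none]) := by
  induction w with
  | nil => rfl
  | cons a w ih =>
    simp_all [AQFA.tape, List.replicate_succ, Nat.mul_succ]

theorem Complex.mapMatrix_ofReal_conjTranspose_mul_self {ι : Type*} [Fintype ι] [DecidableEq ι]
    (M : Matrix ι ι ℝ) :
    (ofRealHom.mapMatrix M)ᴴ * ofRealHom.mapMatrix M = ofRealHom.mapMatrix (Mᵀ * M) := by
  simp only [RingHom.mapMatrix_apply]
  rw [← conjTranspose_map (Complex.ofRealHom : ℝ → ℂ) fun x => by simp,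
    conjTranspose_eq_transpose_of_trivial, Matrix.map_mul]

theorem Matrix.sqrt_smul_transpose_mul_self {m n : Type*} [Fintype m] {q : ℝ} (hq : 0 ≤ q)
    (M : Matrix m n ℝ) : (√q • M)ᵀ * (√q • M) = q • (Mᵀ * M) := by
  rw [transpose_smul, smul_mul, Matrix.mul_smul, smul_smul, Real.mul_self_sqrt hq]

namespace USquare

open Matrix

def counterVec (s : ℂ) (j z : ℤ) : Fin 3 → ℂ := ![s, s * j, s * z]

theorem counterVec_ne_zero {s : ℂ} (hs : s ≠ 0) (j z : ℤ) : counterVec s j z ≠ 0 :=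
  fun h => hs (by simpa [counterVec] using congrFun h 0)

def stepAReal : Matrix (Fin 3) (Fin 3) ℝ := !![1/5, 0, 0; 0, 1/5, 0; 1/5, 0, 1/5]
def stepBReal : Matrix (Fin 3) (Fin 3) ℝ := !![1/5, 0, 0; 1/5, 1/5, 0; -(1/5), -(4/5), 1/5]

-- Rank-one completion of `stepAᴴ stepA + stepBᴴ stepB` to the identity.
def leak₁Real : Matrix (Fin 3) (Fin 3) ℝ := √(4/5) • !![1, -(1/4), 0; 0, 0, 0; 0, 0, 0]
def leak₂Real : Matrix (Fin 3) (Fin 3) ℝ := √(23/100) • !![0, 1, 16/23; 0, 0, 0; 0, 0, 0]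
def leak₃Real : Matrix (Fin 3) (Fin 3) ℝ := √(93/115) • !![0, 0, 1; 0, 0, 0; 0, 0, 0]

def testZeroReal : Matrix (Fin 3) (Fin 3) ℝ := !![0, 0, 0; 0, 0, 0; 0, 0, 1]
def testPassReal : Matrix (Fin 3) (Fin 3) ℝ := !![1, 0, 0; 0, 1, 0; 0, 0, 0]

theorem counting_kraus_real :
    stepARealᵀ * stepAReal + (stepBRealᵀ * stepBReal + (leak₁Realᵀ * leak₁Real +
      (leak₂Realᵀ * leak₂Real + leak₃Realᵀ * leak₃Real))) = 1 := by
  simp only [leak₁Real, leak₂Real, leak₃Real,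
    Matrix.sqrt_smul_transpose_mul_self (by norm_num : (0 : ℝ) ≤ 4 / 5),
    Matrix.sqrt_smul_transpose_mul_self (by norm_num : (0 : ℝ) ≤ 23 / 100),
    Matrix.sqrt_smul_transpose_mul_self (by norm_num : (0 : ℝ) ≤ 93 / 115)]
  ext i j
  fin_cases i <;> fin_cases j <;>
    simp [stepAReal, stepBReal, Matrix.mul_apply, Fin.sum_univ_three] <;> norm_num

theorem test_kraus_real : testZeroRealᵀ * testZeroReal + testPassRealᵀ * testPassReal = 1 := by
  ext i j
  fin_cases i <;> fin_cases j <;>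
    simp [testZeroReal, testPassReal, Matrix.mul_apply, Fin.sum_univ_three]


def stepA : Matrix (Fin 3) (Fin 3) ℂ := Complex.ofRealHom.mapMatrix stepAReal
def stepB : Matrix (Fin 3) (Fin 3) ℂ := Complex.ofRealHom.mapMatrix stepBReal
def leak₁ : Matrix (Fin 3) (Fin 3) ℂ := Complex.ofRealHom.mapMatrix leak₁Real
def leak₂ : Matrix (Fin 3) (Fin 3) ℂ := Complex.ofRealHom.mapMatrix leak₂Real
def leak₃ : Matrix (Fin 3) (Fin 3) ℂ := Complex.ofRealHom.mapMatrix leak₃Real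
def testZero : Matrix (Fin 3) (Fin 3) ℂ := Complex.ofRealHom.mapMatrix testZeroReal
def testPass : Matrix (Fin 3) (Fin 3) ℂ := Complex.ofRealHom.mapMatrix testPassReal

theorem counting_kraus :
    stepAᴴ * stepA + (stepBᴴ * stepB + (leak₁ᴴ * leak₁ + (leak₂ᴴ * leak₂ + leak₃ᴴ * leak₃))) =
      1 := by
  simp only [stepA, stepB, leak₁, leak₂, leak₃, Complex.mapMatrix_ofReal_conjTranspose_mul_self,
    ← map_add, counting_kraus_real, map_one]

theorem test_kraus : testZeroᴴ * testZero + testPassᴴ * testPass = 1 := by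
  simp only [testZero, testPass, Complex.mapMatrix_ofReal_conjTranspose_mul_self,
    ← map_add, test_kraus_real, map_one]

theorem stepA_mulVec (s : ℂ) (j z : ℤ) :
    stepA *ᵥ counterVec s j z = counterVec (s / 5) j (z + 1) := by
  ext i
  fin_cases i <;>
    simp [stepA, stepAReal, mulVec, dotProduct, Fin.sum_univ_three, counterVec] <;> ring

theorem stepB_mulVec (s : ℂ) (j z : ℤ) :
    stepB *ᵥ counterVec s j z = counterVec (s / 5) (j + 1) (z - 1 - 4 * j) := by
  ext i
  fin_cases i <;>
    simp [stepB, stepBReal, mulVec, dotProduct, Fin.sum_univ_three, counterVec] <;> ring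

theorem testZero_mulVec_eq_zero_iff {s : ℂ} (hs : s ≠ 0) (j z : ℤ) :
    testZero *ᵥ counterVec s j z = 0 ↔ z = 0 := by
  constructor
  · intro h
    simpa [testZero, testZeroReal, mulVec, dotProduct, Fin.sum_univ_three, counterVec, hs] using
      congrFun h 2
  · rintro rfl
    ext i
    fin_cases i <;>
      simp [testZero, testZeroReal, mulVec, dotProduct, Fin.sum_univ_three, counterVec]

theorem testPass_mulVec_ne_zero {s : ℂ} (hs : s ≠ 0) (j z : ℤ) :
    testPass *ᵥ counterVec s j z ≠ 0 :=
  fun h => hs (by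
    simpa [testPass, testPassReal, mulVec, dotProduct, Fin.sum_univ_three, counterVec] using
      congrFun h 0)

/-- States: `0, 1` read the leading `¢`; `2` counts; `3` is the universal tester; `4, 5` are
rejecting sinks and `6` is the accepting one. -/
def trans (c : Fin 7) (σ : Option Unit) : List (Matrix (Fin 3) (Fin 3) ℂ × Fin 7) :=
  match c.val, σ with
  | 0, none => [(1, 1)]
  | 1, none => [(1, 2)]
  | 2, some _ => [(stepA, 2), (stepB, 2), (leak₁, 4), (leak₂, 4), (leak₃, 4)]
  | 2, none => [(1, 3)]
  | 3, none => [(testZero, 5), (testPass, 6)]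
  | 3, some _ => [(1, 5)]
  | 5, _ => [(1, 5)]
  | 6, _ => [(1, 6)]
  | _, _ => [(1, 4)]

abbrev aqfa : AQFA Unit where
  m := 7
  n := 3
  isUniv := ![false, false, false, true, false, true, true]
  c₀ := 0
  acceptC := ![false, false, false, false, false, false, true]
  v₀ := ![1, 0, 0]
  v₀_unit := by simp [Fin.sum_univ_three]
  trans := trans
  valid := by
    intro c σ
    fin_cases c <;> rcases σ with _ | ⟨⟩ <;>
      simp only [trans, List.map_cons, List.map_nil, List.sum_cons, List.sum_nil,
        conjTranspose_one, mul_one, add_zero] <;>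
      first | rfl | exact counting_kraus | exact test_kraus


/-- Starting from the counters `(j, z)`, some sequence of `k` moves `stepA`, `stepB` ends with
`z = 0`. Since `j` grows by one at each of the `d` moves `stepB`, the final value of `z` is
`z + k - 4 d j - 2 d²` whatever the order of the moves. -/
def CanReachZero (k : ℕ) (j z : ℤ) : Prop :=
  ∃ d : ℕ, d ≤ k ∧ z + k = 4 * d * j + 2 * d ^ 2

theorem canReachZero_zero (j z : ℤ) : CanReachZero 0 j z ↔ z = 0 := by
  simp [CanReachZero]

theorem canReachZero_succ (k : ℕ) (j z : ℤ) :
    CanReachZero (k + 1) j z ↔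
      CanReachZero k j (z + 1) ∨ CanReachZero k (j + 1) (z - 1 - 4 * j) := by
  constructor
  · rintro ⟨_ | d, hd, he⟩
    · exact .inl ⟨0, Nat.zero_le _, by push_cast at he ⊢; linarith⟩
    · exact .inr ⟨d, by omega, by push_cast at he ⊢; linarith⟩
  · rintro (⟨d, hd, he⟩ | ⟨d, hd, he⟩)
    · exact ⟨d, by omega, by push_cast at he ⊢; linarith⟩
    · exact ⟨d + 1, by omega, by push_cast at he ⊢; linarith⟩

theorem canReachZero_two_mul_iff (l : ℕ) : CanReachZero (2 * l) 0 0 ↔ ∃ n : ℕ, l = n ^ 2 := by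
  constructor
  · rintro ⟨d, -, he⟩
    exact ⟨d, by push_cast at he; exact_mod_cast (by linarith : (l : ℤ) = d ^ 2)⟩
  · rintro ⟨n, rfl⟩
    exact ⟨n, by nlinarith [Nat.le_self_pow two_ne_zero n], by push_cast; ring⟩

theorem acc_endmarker_iff {s : ℂ} (hs : s ≠ 0) (j z : ℤ) :
    aqfa.Acc [none, none] (2, counterVec s j z) ↔ z = 0 := by
  rw [aqfa.acc_cons_of_trans_eq_one rfl _ (counterVec_ne_zero hs j z),
    aqfa.acc_cons_of_isUniv rfl]
  simp [aqfa, trans, AQFA.Acc, testPass_mulVec_ne_zero hs, testZero_mulVec_eq_zero_iff hs]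

theorem acc_count_cons {s : ℂ} (hs : s ≠ 0) (j z : ℤ) (rest : List (Option Unit)) :
    aqfa.Acc (some () :: rest) (2, counterVec s j z) ↔
      aqfa.Acc rest (2, counterVec (s / 5) j (z + 1)) ∨
        aqfa.Acc rest (2, counterVec (s / 5) (j + 1) (z - 1 - 4 * j)) := by
  have hleak : ∀ v, ¬ aqfa.Acc rest (4, v) :=
    aqfa.not_acc_of_trap (c := 4) rfl rfl (fun σ p hp => by cases σ <;> simp_all [aqfa, trans]) rest
  have hs5 : s / 5 ≠ 0 := div_ne_zero hs (by norm_num)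
  rw [aqfa.acc_cons_of_not_isUniv (c := 2) rfl]
  simp [trans, stepA_mulVec, stepB_mulVec, counterVec_ne_zero hs5, hleak]

theorem acc_count_iff (k : ℕ) {s : ℂ} (hs : s ≠ 0) (j z : ℤ) :
    aqfa.Acc (List.replicate k (some ()) ++ [none, none]) (2, counterVec s j z) ↔
      CanReachZero k j z := by
  induction k generalizing s j z with
  | zero => rw [canReachZero_zero, ← acc_endmarker_iff hs]; rfl
  | succ k ih =>
    have hs5 : s / 5 ≠ 0 := div_ne_zero hs (by norm_num)
    rw [List.replicate_succ, List.cons_append, acc_count_cons hs, ih hs5, ih hs5,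
      canReachZero_succ]

theorem lang_eq : aqfa.lang = {w : List Unit | ∃ n : ℕ, w.length = n ^ 2} := by
  ext w
  have hv₀ : aqfa.v₀ = counterVec 1 0 0 := by
    ext i; fin_cases i <;> simp [counterVec]
  have hne := counterVec_ne_zero one_ne_zero 0 0
  change aqfa.Acc (AQFA.tape w) (aqfa.c₀, aqfa.v₀) ↔ ∃ n : ℕ, w.length = n ^ 2
  rw [AQFA.tape_unit, hv₀, aqfa.acc_cons_of_trans_eq_one (c' := 1) rfl _ hne,
    aqfa.acc_cons_of_trans_eq_one (c' := 2) rfl _ hne, acc_count_iff _ one_ne_zero,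
    canReachZero_two_mul_iff]

theorem twoAlternating : aqfa.TwoAlternating := by
  refine aqfa.twoAlternating_of_isUniv_trans fun c σ hc p hp => ?_
  fin_cases c <;> cases σ <;> simp_all [trans]
  rcases hp with rfl | rfl <;> rfl

end USquare

/-- The unary language `USQUARE = {1^m : m = n^2 for some n ≥ 0}` can be
recognized by a two-alternating AQFA over the unary alphabet `{1}`. -/
theorem usquare_recognized_by_two_alternating_AQFA :
    ∃ A : AQFA Unit, A.TwoAlternating ∧
      A.lang = { w : List Unit | ∃ n : ℕ, w.length = n ^ 2 } :=
  ⟨USquare.aqfa, USquare.twoAlternating, USquare.lang_eq⟩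

end
end
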